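/- Let Γ be a regular nicely distance-balanced graph with valency k = 3, diameter d = 3 and γ(Γ) = 4. Then for every edge x_0 x_1 of Γ we have |D^1_2(x_1,x_0)| = |D^2_1(x_1,x_0)| = 2. -/

import Mathlib

/-!
For an edge `uv` of a graph of diameter `3`, `W_{u,v}` is the disjoint union of `{u}`,
`D^1_2(u,v)` and `D^2_3(u,v)`, so `γ = 4` gives `|D^1_2(u,v)| + |D^2_3(u,v)| = 3`. Every vertex
of `D^2_3(u,v)` has a neighbour in `D^1_2(u,v)`, so the latter is nonempty, and by cubicity
`|D^1_2(u,v)| = 1` exactly when `u` and `v` have a common neighbour; then the vertex `z` of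
`D^1_2(u,v)` has neighbourhood `{u} ∪ D^2_3(u,v)`, all of whose members other than `u` are at
distance `3` from `v`.

If `D^1_2(x₁,x₀) = {z}`, a common neighbour `w` of `x₀, x₁` forces `D^1_2(x₀,x₁) = {u}` and
`D^1_2(w,x₀) = {w'}`. On the edge `x₀u` this puts `x₁, w` in `D^1_2(x₀,u)` and `z, w'` in
`D^2_3(x₀,u)`: four vertices where there is room for three.
-/

open SimpleGraph Finset

/-- `W_{u,v}`: the set of vertices strictly closer to `u` than to `v`. -/
noncomputable def ndbW {V : Type*} [Fintype V] (G : SimpleGraph V) (u v : V) : Finset V :=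
  Finset.univ.filter fun x => G.dist x u < G.dist x v

/-- `D^i_j(u,v)`: the set of vertices at distance `i` from `u` and `j` from `v`. -/
noncomputable def ndbD {V : Type*} [Fintype V] (G : SimpleGraph V) (u v : V) (i j : ℕ) : Finset V :=
  Finset.univ.filter fun x => G.dist x u = i ∧ G.dist x v = j

/-- `G` is nicely distance-balanced with constant `γ`. -/
def IsNDB {V : Type*} [Fintype V] (G : SimpleGraph V) (γ : ℕ) : Prop :=
  ∀ u v : V, G.Adj u v → (ndbW G u v).card = γ ∧ (ndbW G v u).card = γ

/-- `G` has diameter `d`. -/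
def HasDiam {V : Type*} [Fintype V] (G : SimpleGraph V) (d : ℕ) : Prop :=
  (∀ u v : V, G.dist u v ≤ d) ∧ ∃ u v : V, G.dist u v = d

section Distance

variable {V : Type*} {G : SimpleGraph V}

lemma SimpleGraph.Adj.dist_le_dist_add_one {u v : V} (huv : G.Adj u v) (x : V) :
    G.dist x v ≤ G.dist x u + 1 := by
  simpa [dist_eq_one_iff_adj.mpr huv] using huv.reachable.dist_triangle_right x

lemma SimpleGraph.exists_adj_dist_eq_of_dist_eq_add_one {x u : V} {n : ℕ}
    (hd : G.dist x u = n + 1) : ∃ m, G.Adj x m ∧ G.dist m u = n := by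
  obtain ⟨p, hp⟩ := exists_walk_of_dist_ne_zero (by omega : G.dist x u ≠ 0)
  cases p with
  | nil => simp at hd
  | @cons _ m _ hxm q =>
    have hq : G.dist m u ≤ q.length := dist_le q
    have htri := hxm.reachable.dist_triangle_left u
    rw [dist_eq_one_iff_adj.mpr hxm] at htri
    simp only [Walk.length_cons] at hp
    exact ⟨m, hxm, by omega⟩

end Distance

section Layers

variable {V : Type*} [Fintype V] {G : SimpleGraph V}

lemma mem_ndbD {u v x : V} {i j : ℕ} :
    x ∈ ndbD G u v i j ↔ G.dist x u = i ∧ G.dist x v = j := by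
  simp [ndbD]

lemma ndbD_comm (u v : V) (i j : ℕ) : ndbD G u v i j = ndbD G v u j i := by
  ext x
  simp only [mem_ndbD, and_comm]

lemma ndbD_zero_one {u v : V} (huv : G.Adj u v) : ndbD G u v 0 1 = {u} := by
  ext x
  rw [mem_ndbD, mem_singleton]
  constructor
  · rintro ⟨hxu, hxv⟩
    have hr : G.Reachable x u := (dist_eq_one_iff_adj.mp hxv).reachable.trans huv.reachable.symm
    exact hr.dist_eq_zero_iff.mp hxu
  · rintro rfl
    exact ⟨dist_self, dist_eq_one_iff_adj.mpr huv⟩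

lemma dist_of_ndbD_eq_singleton {u v z : V} {i j : ℕ} (hz : ndbD G u v i j = {z}) :
    G.dist z u = i ∧ G.dist z v = j :=
  mem_ndbD.mp (hz ▸ mem_singleton_self z)

lemma exists_adj_mem_ndbD_of_mem_ndbD {u v y : V} {n : ℕ} (huv : G.Adj u v)
    (hy : y ∈ ndbD G u v (n + 1) (n + 2)) : ∃ m ∈ ndbD G u v n (n + 1), G.Adj y m := by
  rw [mem_ndbD] at hy
  obtain ⟨m, hym, hmu⟩ := exists_adj_dist_eq_of_dist_eq_add_one hy.1
  have hmv := huv.dist_le_dist_add_one m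
  have hyv := hym.symm.dist_le_dist_add_one v
  rw [dist_comm, dist_comm (u := v)] at hyv
  exact ⟨m, mem_ndbD.mpr ⟨hmu, by omega⟩, hym⟩

lemma ndbW_eq_biUnion [DecidableEq V] {d : ℕ} (hd : ∀ x y : V, G.dist x y ≤ d) {u v : V}
    (huv : G.Adj u v) : ndbW G u v = (range d).biUnion fun i => ndbD G u v i (i + 1) := by
  ext x
  have hvu := huv.dist_le_dist_add_one x
  have huv' := huv.symm.dist_le_dist_add_one x
  have hxv := hd x v
  simp only [ndbW, mem_filter, mem_univ, true_and, mem_biUnion, mem_range, mem_ndbD]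
  constructor
  · intro h
    exact ⟨_, by omega, rfl, by omega⟩
  · rintro ⟨i, -, rfl, h⟩
    omega

lemma card_ndbW_eq_sum {d : ℕ} (hd : ∀ x y : V, G.dist x y ≤ d) {u v : V} (huv : G.Adj u v) :
    #(ndbW G u v) = ∑ i ∈ range d, #(ndbD G u v i (i + 1)) := by
  classical
  rw [ndbW_eq_biUnion hd huv, card_biUnion]
  intro i _ j _ hij
  refine disjoint_left.mpr fun x hi hj => hij ?_
  rw [mem_ndbD] at hi hj
  omega

lemma card_ndbW_of_dist_le_three (hd : ∀ x y : V, G.dist x y ≤ 3) {u v : V} (huv : G.Adj u v) :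
    #(ndbW G u v) = 1 + #(ndbD G u v 1 2) + #(ndbD G u v 2 3) := by
  rw [card_ndbW_eq_sum hd huv, sum_range_succ, sum_range_succ, sum_range_one, ndbD_zero_one huv,
    card_singleton]

lemma neighborFinset_eq_insert_union [DecidableEq V] [DecidableRel G.Adj] {u v : V}
    (huv : G.Adj u v) :
    G.neighborFinset u = insert v (ndbD G u v 1 1 ∪ ndbD G u v 1 2) := by
  ext x
  simp only [mem_neighborFinset, mem_insert, mem_union, mem_ndbD]
  constructor
  · intro hux
    have hxv := huv.dist_le_dist_add_one x
    have hxu := dist_eq_one_iff_adj.mpr hux.symm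
    by_cases hx : x = v
    · exact .inl hx
    have hv0 := (hux.symm.reachable.trans huv.reachable).pos_dist_of_ne hx
    omega
  · rintro (rfl | ⟨hxu, -⟩ | ⟨hxu, -⟩)
    · exact huv
    all_goals exact (dist_eq_one_iff_adj.mp hxu).symm

lemma degree_eq_card_ndbD_one_one_add_card_ndbD_one_two [DecidableRel G.Adj] {u v : V}
    (huv : G.Adj u v) : G.degree u = #(ndbD G u v 1 1) + #(ndbD G u v 1 2) + 1 := by
  classical
  have hv : v ∉ ndbD G u v 1 1 ∪ ndbD G u v 1 2 := by
    simp [mem_ndbD]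
  have hdisj : Disjoint (ndbD G u v 1 1) (ndbD G u v 1 2) :=
    disjoint_left.mpr fun x h₁ h₂ => by rw [mem_ndbD] at h₁ h₂; omega
  rw [← card_neighborFinset_eq_degree, neighborFinset_eq_insert_union huv,
    card_insert_of_notMem hv, card_union_of_disjoint hdisj]

end Layers

section Cubic

variable {V : Type*} [Fintype V] {G : SimpleGraph V}

lemma card_ndbD_one_two_add_card_ndbD_two_three {γ : ℕ} (hd : ∀ x y : V, G.dist x y ≤ 3)
    (hndb : IsNDB G γ) {u v : V} (huv : G.Adj u v) :
    #(ndbD G u v 1 2) + #(ndbD G u v 2 3) + 1 = γ := by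
  have := card_ndbW_of_dist_le_three hd huv
  have := (hndb u v huv).1
  omega

lemma ndbD_one_two_nonempty {γ : ℕ} (hd : ∀ x y : V, G.dist x y ≤ 3) (hndb : IsNDB G γ)
    (hγ : 2 ≤ γ) {u v : V} (huv : G.Adj u v) : (ndbD G u v 1 2).Nonempty := by
  have hcard := card_ndbD_one_two_add_card_ndbD_two_three hd hndb huv
  by_contra hempty
  rw [not_nonempty_iff_eq_empty] at hempty
  rw [hempty, card_empty] at hcard
  obtain ⟨y, hy⟩ := card_pos.mp (by omega : 0 < #(ndbD G u v 2 3))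
  obtain ⟨m, hm, -⟩ := exists_adj_mem_ndbD_of_mem_ndbD (n := 1) huv hy
  simp [hempty] at hm

variable [DecidableRel G.Adj]

lemma card_ndbD_one_two_eq_one_iff (hreg : G.IsRegularOfDegree 3)
    (hd : ∀ x y : V, G.dist x y ≤ 3) (hndb : IsNDB G 4) {u v : V} (huv : G.Adj u v) :
    #(ndbD G u v 1 2) = 1 ↔ (ndbD G u v 1 1).Nonempty := by
  have hdeg := degree_eq_card_ndbD_one_one_add_card_ndbD_one_two huv
  rw [hreg u] at hdeg
  have hpos := card_pos.mpr (ndbD_one_two_nonempty hd hndb (by norm_num) huv)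
  rw [← card_pos]
  omega

lemma neighborFinset_eq_insert_ndbD_two_three [DecidableEq V] (hreg : G.IsRegularOfDegree 3)
    (hd : ∀ x y : V, G.dist x y ≤ 3) (hndb : IsNDB G 4) {u v z : V} (huv : G.Adj u v)
    (hz : ndbD G u v 1 2 = {z}) : G.neighborFinset z = insert u (ndbD G u v 2 3) := by
  have hzu : G.Adj z u := dist_eq_one_iff_adj.mp (dist_of_ndbD_eq_singleton hz).1
  have hsub : insert u (ndbD G u v 2 3) ⊆ G.neighborFinset z := by
    intro y hy
    rw [mem_neighborFinset]
    rcases mem_insert.mp hy with rfl | hy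
    · exact hzu
    · obtain ⟨m, hm, hym⟩ := exists_adj_mem_ndbD_of_mem_ndbD (n := 1) huv hy
      rw [hz, mem_singleton] at hm
      exact hm ▸ hym.symm
  have hu : u ∉ ndbD G u v 2 3 := by simp [mem_ndbD]
  have hcard := card_ndbD_one_two_add_card_ndbD_two_three hd hndb huv
  rw [hz, card_singleton] at hcard
  refine (eq_of_subset_of_card_le hsub ?_).symm
  rw [card_neighborFinset_eq_degree, hreg z, card_insert_of_notMem hu]
  omega

lemma eq_of_adj_of_ndbD_one_two_eq_singleton (hreg : G.IsRegularOfDegree 3)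
    (hd : ∀ x y : V, G.dist x y ≤ 3) (hndb : IsNDB G 4) {u v y z : V} (huv : G.Adj u v)
    (hz : ndbD G u v 1 2 = {z}) (hzy : G.Adj z y) (hyv : G.dist y v ≠ 3) : y = u := by
  classical
  rw [← mem_neighborFinset, neighborFinset_eq_insert_ndbD_two_three hreg hd hndb huv hz,
    mem_insert, mem_ndbD] at hzy
  exact hzy.resolve_right fun h => hyv h.2

lemma dist_eq_three_of_ndbD_one_two_eq_singleton (hreg : G.IsRegularOfDegree 3)
    (hd : ∀ x y : V, G.dist x y ≤ 3) (hndb : IsNDB G 4) {p v u z : V} (hpv : G.Adj p v)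
    (hz : ndbD G p v 1 2 = {z}) (huv : G.Adj u v) (hpu : G.dist p u = 2) :
    G.dist z u = 3 := by
  have hzv := (dist_of_ndbD_eq_singleton hz).2
  have hzu := huv.dist_le_dist_add_one z
  have hne_one : G.dist z u ≠ 1 := fun h => by
    have hup := eq_of_adj_of_ndbD_one_two_eq_singleton hreg hd hndb hpv hz
      (dist_eq_one_iff_adj.mp h) (by rw [dist_eq_one_iff_adj.mpr huv]; omega)
    simp [hup] at hpu
  have hne_two : G.dist z u ≠ 2 := fun h => by
    obtain ⟨m, hzm, hmu⟩ := exists_adj_dist_eq_of_dist_eq_add_one (n := 1) h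
    have hmv := huv.dist_le_dist_add_one m
    have hmp := eq_of_adj_of_ndbD_one_two_eq_singleton hreg hd hndb hpv hz hzm (by omega)
    rw [hmp] at hmu
    omega
  have := hd z u
  omega

lemma dist_eq_two_of_mem_ndbD_one_one (hreg : G.IsRegularOfDegree 3)
    (hd : ∀ x y : V, G.dist x y ≤ 3) (hndb : IsNDB G 4) {u v w z : V} (huv : G.Adj u v)
    (hz : ndbD G u v 1 2 = {z}) (hw : w ∈ ndbD G u v 1 1) : G.dist w z = 2 := by
  rw [mem_ndbD] at hw
  have hzD := dist_of_ndbD_eq_singleton hz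
  have hle := (dist_eq_one_iff_adj.mp hzD.1).symm.dist_le_dist_add_one w
  have hge := (dist_eq_one_iff_adj.mp hw.2).dist_le_dist_add_one z
  have hne_one : G.dist w z ≠ 1 := fun h1 => by
    have := eq_of_adj_of_ndbD_one_two_eq_singleton hreg hd hndb huv hz
      (dist_eq_one_iff_adj.mp (G.dist_comm.trans h1)) (by omega)
    simp [this] at hw
  have := G.dist_comm (u := w) (v := z)
  omega

lemma card_ndbD_one_two_eq_two (hreg : G.IsRegularOfDegree 3)
    (hd : ∀ x y : V, G.dist x y ≤ 3) (hndb : IsNDB G 4) {x₀ x₁ : V} (h : G.Adj x₀ x₁) :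
    #(ndbD G x₁ x₀ 1 2) = 2 := by
  classical
  have hdeg := degree_eq_card_ndbD_one_one_add_card_ndbD_one_two h.symm
  rw [hreg x₁] at hdeg
  by_contra hne
  have hone : #(ndbD G x₁ x₀ 1 2) = 1 := by
    have := card_pos.mpr (ndbD_one_two_nonempty hd hndb (by norm_num) h.symm)
    omega
  obtain ⟨z, hz⟩ := card_eq_one.mp hone
  obtain ⟨w, hw⟩ := (card_ndbD_one_two_eq_one_iff hreg hd hndb h.symm).mp hone
  rw [mem_ndbD] at hw
  have hwx₀ : G.Adj w x₀ := dist_eq_one_iff_adj.mp hw.2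
  obtain ⟨u, hu⟩ := card_eq_one.mp <| (card_ndbD_one_two_eq_one_iff hreg hd hndb h).mpr
    ⟨w, mem_ndbD.mpr hw.symm⟩
  obtain ⟨w', hw'⟩ := card_eq_one.mp <| (card_ndbD_one_two_eq_one_iff hreg hd hndb hwx₀).mpr
    ⟨x₁, mem_ndbD.mpr ⟨G.dist_comm.trans hw.1, dist_eq_one_iff_adj.mpr h.symm⟩⟩
  have huD := dist_of_ndbD_eq_singleton hu
  have hzD := dist_of_ndbD_eq_singleton hz
  have hw'D := dist_of_ndbD_eq_singleton hw'
  have hux₀ : G.Adj u x₀ := dist_eq_one_iff_adj.mp huD.1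
  have hwu := dist_eq_two_of_mem_ndbD_one_one hreg hd hndb h hu (mem_ndbD.mpr hw.symm)
  have hzu := dist_eq_three_of_ndbD_one_two_eq_singleton hreg hd hndb h.symm hz hux₀
    (G.dist_comm.trans huD.2)
  have hw'u := dist_eq_three_of_ndbD_one_two_eq_singleton hreg hd hndb hwx₀ hw' hux₀ hwu
  have hzw' : z ≠ w' := by
    rintro rfl
    have := eq_of_adj_of_ndbD_one_two_eq_singleton hreg hd hndb h.symm hz
      (dist_eq_one_iff_adj.mp hw'D.1) (by omega)
    simp [this] at hw
  have h12 : {x₁, w} ⊆ ndbD G x₀ u 1 2 := by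
    simp only [insert_subset_iff, singleton_subset_iff, mem_ndbD]
    exact ⟨⟨dist_eq_one_iff_adj.mpr h.symm, G.dist_comm.trans huD.2⟩, hw.2, hwu⟩
  have h23 : {z, w'} ⊆ ndbD G x₀ u 2 3 := by
    simp only [insert_subset_iff, singleton_subset_iff, mem_ndbD]
    exact ⟨⟨hzD.2, hzu⟩, hw'D.2, hw'u⟩
  have hD12 : 2 ≤ #(ndbD G x₀ u 1 2) :=
    (card_pair (dist_eq_one_iff_adj.mp hw.1).ne').ge.trans (card_le_card h12)
  have hD23 : 2 ≤ #(ndbD G x₀ u 2 3) := (card_pair hzw').ge.trans (card_le_card h23)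
  have := card_ndbD_one_two_add_card_ndbD_two_three hd hndb hux₀.symm
  omega

end Cubic

theorem stmt_11_general {V : Type*} [Fintype V] (G : SimpleGraph V) [DecidableRel G.Adj]
    (hreg : G.IsRegularOfDegree 3)
    (hdiam : HasDiam G 3) (hndb : IsNDB G 4)
    (x₀ x₁ : V) (h : G.Adj x₀ x₁) :
    (ndbD G x₁ x₀ 1 2).card = 2 ∧ (ndbD G x₁ x₀ 2 1).card = 2 :=
  ⟨card_ndbD_one_two_eq_two hreg hdiam.1 hndb h,
    ndbD_comm (G := G) x₁ x₀ 2 1 ▸ card_ndbD_one_two_eq_two hreg hdiam.1 hndb h.symm⟩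

/-- In a regular NDB graph with valency `3`, diameter `3` and
`γ = 4`, for every edge `x₀x₁` we have `|D^1_2(x₁,x₀)| = |D^2_1(x₁,x₀)| = 2`. -/
theorem stmt_11 {V : Type*} [Fintype V] (G : SimpleGraph V) [DecidableRel G.Adj]
    (hconn : G.Connected) (hreg : G.IsRegularOfDegree 3)
    (hdiam : HasDiam G 3) (hndb : IsNDB G 4)
    (x₀ x₁ : V) (h : G.Adj x₀ x₁) :
    (ndbD G x₁ x₀ 1 2).card = 2 ∧ (ndbD G x₁ x₀ 2 1).card = 2 :=
  stmt_11_general G hreg hdiam hndb x₀ x₁ h
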